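/- The Cayley transformation is invariant under the μ-binomial transform: for every sequence a : ℕ → ℚ, every μ ∈ ℚ and every k ≥ 2, if b_m = Σ_{i=0}^{m} C(m,i) μ^{m-i} a_i, then Σ_{i=0}^{k-2} (−1)^i C(k,i) b_{k-i} b_1^i b_0^{k-i-1} + (k−1)(−1)^{k+1} b_1^k = Σ_{i=0}^{k-2} (−1)^i C(k,i) a_{k-i} a_1^i a_0^{k-i-1} + (k−1)(−1)^{k+1} a_1^k. -/

import Mathlib

/-!
Put `a'₀ = 1` and `a'ⱼ = aⱼ a₀^(j-1)` for `j ≥ 1`. Read backwards, the Cayley sum is the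
`(-a₁)`-binomial transform of `a'` without its terms `j = 0, 1`, and these two terms add up to
the correction `(k-1)(-1)^(k+1) a₁^k`; so the Cayley transform of `a` is `B_{-a₁}(a')`.
If `b = B_μ(a)` then `b₀ = a₀`, `b₁ = a₁ + μ a₀` and `b' = B_{μ a₀}(a')`; since binomial
transforms compose additively, `B_ν ∘ B_μ = B_{μ+ν}`, the Cayley transform of `b` is
`B_{μ a₀ - b₁}(a') = B_{-a₁}(a')`.
-/

open Finset

variable {R : Type*}

def binomialTransform [CommSemiring R] (μ : R) (a : ℕ → R) (m : ℕ) : R :=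
  ∑ i ∈ range (m + 1), (m.choose i : R) * μ ^ (m - i) * a i

/-- Morally `(a j / a 0) * a 0 ^ j`, written without dividing by `a 0`. -/
def headNormalize [CommSemiring R] (a : ℕ → R) : ℕ → R
  | 0 => 1
  | j + 1 => a (j + 1) * a 0 ^ j

def cayleyTransform [CommRing R] (a : ℕ → R) (k : ℕ) : R :=
  (∑ i ∈ range (k - 1), (-1 : R) ^ i * (k.choose i : R) * a (k - i) * a 1 ^ i * a 0 ^ (k - i - 1))
    + ((k : R) - 1) * (-1 : R) ^ (k + 1) * a 1 ^ k

section CommSemiring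

variable [CommSemiring R]

@[simp]
theorem binomialTransform_apply_zero (μ : R) (a : ℕ → R) : binomialTransform μ a 0 = a 0 := by
  simp [binomialTransform]

theorem binomialTransform_apply_one (μ : R) (a : ℕ → R) :
    binomialTransform μ a 1 = a 1 + μ * a 0 := by
  simp [binomialTransform, sum_range_succ, add_comm]

theorem binomialTransform_binomialTransform (μ ν : R) (a : ℕ → R) :
    binomialTransform ν (binomialTransform μ a) = binomialTransform (μ + ν) a := by
  ext m
  simp only [binomialTransform, mul_sum, range_eq_Ico]
  rw [← sum_Ico_Ico_comm]
  refine sum_congr rfl fun j hj => ?_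
  have hjm : j ≤ m := by simp at hj; omega
  rw [sum_Ico_eq_sum_range, add_pow, mul_sum, sum_mul, show m + 1 - j = m - j + 1 by omega]
  refine sum_congr rfl fun t _ => ?_
  have hchoose : (m.choose (j + t) : R) * ((j + t).choose j) = m.choose j * (m - j).choose t := by
    have h := Nat.choose_mul (n := m) (Nat.le_add_right j t)
    rw [Nat.add_sub_cancel_left] at h
    rw [← Nat.cast_mul, ← Nat.cast_mul, h]
  rw [show m - (j + t) = m - j - t by omega, Nat.add_sub_cancel_left]
  trans (m.choose (j + t) : R) * ((j + t).choose j) * (μ ^ t * ν ^ (m - j - t) * a j)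
  · ring
  rw [hchoose]
  ring

theorem headNormalize_binomialTransform (μ : R) (a : ℕ → R) :
    headNormalize (binomialTransform μ a) = binomialTransform (μ * a 0) (headNormalize a) := by
  ext (_ | j)
  · simp [headNormalize, binomialTransform]
  rw [headNormalize, binomialTransform_apply_zero, binomialTransform, binomialTransform,
    sum_range_succ', add_mul, sum_mul,
    sum_range_succ' (fun i ↦ ((j + 1).choose i : R) * (μ * a 0) ^ (j + 1 - i) * headNormalize a i)]
  congr 1
  · refine sum_congr rfl fun i hi => ?_
    have hij : i ≤ j := by simp at hi; omega
    rw [headNormalize, show j + 1 - (i + 1) = j - i by omega, mul_pow,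
      ← pow_sub_mul_pow (a 0) hij]
    ring
  · simp [headNormalize, mul_pow, pow_succ]
    ring

end CommSemiring

theorem cayleyTransform_eq_binomialTransform [CommRing R] (a : ℕ → R) (k : ℕ) :
    cayleyTransform a k = binomialTransform (-a 1) (headNormalize a) k := by
  rcases k with _ | _ | n
  · simp [cayleyTransform, binomialTransform, headNormalize]
  · simp [cayleyTransform, binomialTransform, headNormalize, sum_range_succ]
  rw [cayleyTransform, binomialTransform, sum_range_succ', sum_range_succ',
    add_assoc (∑ j ∈ range (n + 1), _), Nat.add_sub_cancel, ← sum_range_reflect]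
  congr 1
  · refine sum_congr rfl fun j hj => ?_
    have hjn : j ≤ n := by simp at hj; omega
    rw [show n + 1 - 1 - j = n - j by omega, show n + 1 + 1 - (n - j) = j + 1 + 1 by omega,
      show n + 1 + 1 - (j + 1 + 1) = n - j by omega,
      Nat.choose_symm_of_eq_add (show n + 1 + 1 = n - j + (j + 1 + 1) by omega),
      Nat.add_sub_cancel, headNormalize, neg_pow]
    ring
  · simp [headNormalize]
    ring

theorem cayley_binomial_invariant_general (a : ℕ → ℚ) (μ : ℚ) (k : ℕ) (b : ℕ → ℚ)
    (hb : ∀ m, b m = ∑ i ∈ Finset.range (m + 1), (m.choose i : ℚ) * μ ^ (m - i) * a i) :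
    (∑ i ∈ Finset.range (k - 1), (-1 : ℚ) ^ i * (k.choose i : ℚ) *
        b (k - i) * b 1 ^ i * b 0 ^ (k - i - 1))
      + ((k : ℚ) - 1) * (-1 : ℚ) ^ (k + 1) * b 1 ^ k
    = (∑ i ∈ Finset.range (k - 1), (-1 : ℚ) ^ i * (k.choose i : ℚ) *
        a (k - i) * a 1 ^ i * a 0 ^ (k - i - 1))
      + ((k : ℚ) - 1) * (-1 : ℚ) ^ (k + 1) * a 1 ^ k := by
  obtain rfl : b = binomialTransform μ a := funext hb
  change cayleyTransform (binomialTransform μ a) k = cayleyTransform a k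
  rw [cayleyTransform_eq_binomialTransform, cayleyTransform_eq_binomialTransform,
    headNormalize_binomialTransform, binomialTransform_binomialTransform,
    binomialTransform_apply_one, show μ * a 0 + -(a 1 + μ * a 0) = -a 1 by ring]

/-- The Cayley transformation is invariant under the μ-binomial transform. -/
theorem cayley_binomial_invariant (a : ℕ → ℚ) (μ : ℚ) (k : ℕ) (hk : 2 ≤ k) (b : ℕ → ℚ)
    (hb : ∀ m, b m = ∑ i ∈ Finset.range (m + 1), (m.choose i : ℚ) * μ ^ (m - i) * a i) :
    (∑ i ∈ Finset.range (k - 1), (-1 : ℚ) ^ i * (k.choose i : ℚ) *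
        b (k - i) * b 1 ^ i * b 0 ^ (k - i - 1))
      + ((k : ℚ) - 1) * (-1 : ℚ) ^ (k + 1) * b 1 ^ k
    = (∑ i ∈ Finset.range (k - 1), (-1 : ℚ) ^ i * (k.choose i : ℚ) *
        a (k - i) * a 1 ^ i * a 0 ^ (k - i - 1))
      + ((k : ℚ) - 1) * (-1 : ℚ) ^ (k + 1) * a 1 ^ k :=
  cayley_binomial_invariant_general a μ k b hb
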